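/- If P and Q are S-Motzkin paths and Q is inserted into P immediately after the k-th up step of P (for some k with 1 ≤ k ≤ number of up steps of P), or appended at the end of P, the resulting word is again an S-Motzkin path. -/

import Mathlib

inductive Step : Type
  | u : Step
  | d : Step
  | h : Step
deriving DecidableEq, Repr

def stepVal : Step → ℤ
  | Step.u => 1
  | Step.d => -1
  | Step.h => 0

/-- Sum of step values (final height) of a word. -/
def hsum (w : List Step) : ℤ := (w.map stepVal).sum

/-- All prefixes have nonnegative height. -/
def NonnegPrefixes (w : List Step) : Prop := ∀ p : List Step, p <+: w → 0 ≤ hsum p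

/-- A Motzkin path: nonnegative prefix heights and total height 0. -/
def IsMotzkin (w : List Step) : Prop := NonnegPrefixes w ∧ hsum w = 0

/-- The word (hu)^n. -/
def huWord (n : ℕ) : List Step := (List.replicate n [Step.h, Step.u]).flatten

/-- An S-Motzkin path with n up, n down, n horizontal steps:
a Motzkin path whose subword of non-down steps is (hu)^n. -/
def IsSMotzkin (n : ℕ) (w : List Step) : Prop :=
  IsMotzkin w ∧ w.count Step.u = n ∧ w.count Step.d = n ∧ w.count Step.h = n ∧
    w.filter (fun s => s ≠ Step.d) = huWord n

/-- A nonempty word over {h, u}. -/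
def HUBlock (A : List Step) : Prop := A ≠ [] ∧ ∀ s ∈ A, s = Step.h ∨ s = Step.u

/-- Glue blocks A_i with runs of d_i down steps: A_0 d^{d_1} A_1 d^{d_2} ... -/
def joinAM (As : List (List Step)) (ds : List ℕ) : List Step :=
  (List.zipWith (fun A k => A ++ List.replicate k Step.d) As ds).flatten

/-- w decomposes as A_0 D_1 A_1 D_2 ... A_{t-1} D_t with A_i nonempty over {h,u}
and D_i nonempty runs of down steps. -/
def AMDecomp (w : List Step) (As : List (List Step)) (ds : List ℕ) : Prop :=
  As.length = ds.length ∧ (∀ A ∈ As, HUBlock A) ∧ (∀ k ∈ ds, 0 < k) ∧ w = joinAM As ds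

/-- An Asinowski–Mansour path with n up, n down, n horizontal steps. -/
def IsAM (n : ℕ) (w : List Step) : Prop :=
  IsMotzkin w ∧ w.count Step.u = n ∧ w.count Step.d = n ∧ w.count Step.h = n ∧
    ∃ As ds, AMDecomp w As ds

/-- A Dyck path with n up and n down steps, encoded over the alphabet Step. -/
def IsDyck (n : ℕ) (w : List Step) : Prop :=
  (∀ s ∈ w, s = Step.u ∨ s = Step.d) ∧ w.count Step.u = n ∧ w.count Step.d = n ∧
    NonnegPrefixes w

/-- Height of the path at the start of step i. -/
def heightAt (w : List Step) (i : ℕ) : ℤ := hsum (w.take i)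

/-- Two horizontal steps at positions i < j, at the same height, with all steps
strictly between them at or above that height. -/
def Matched (w : List Step) (i j : ℕ) : Prop :=
  i < j ∧ w[i]? = some Step.h ∧ w[j]? = some Step.h ∧
    heightAt w i = heightAt w j ∧ ∀ k, i < k → k < j → heightAt w i ≤ heightAt w k

/-- Positions of the horizontal steps of w, from left to right. -/
def hPositions (w : List Step) : List ℕ := List.findIdxs (fun s => s = Step.h) w

/-- Lexicographic (weak) order on lists of naturals. -/
def LexLe (l l' : List ℕ) : Prop := l = l' ∨ List.Lex (· < ·) l l'

/-- w is an S-Motzkin word obtained by inserting horizontal steps into D. -/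
def ValidIns (D w : List Step) : Prop :=
  (∃ m, IsSMotzkin m w) ∧ w.filter (fun s => s ≠ Step.h) = D

/-- w is the greedy h-insertion into D: each h leftmost, i.e. the list of positions
of the h's is lexicographically minimal among all valid insertions. -/
def GreedyFor (D w : List Step) : Prop :=
  ValidIns D w ∧ ∀ w', ValidIns D w' → LexLe (hPositions w) (hPositions w')

/-!
Inserting a word with nonnegative prefix heights and total height 0 at any point of a Motzkin
path gives a Motzkin path, so only the non-`d` subword needs care. Since `P1` ends with `u`, its
non-`d` subword is a prefix of `(hu)^m` ending in `u`, hence a power `(hu)^j`. Powers of `hu`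
commute, so writing `w` for the non-`d` subword of `P2`, the non-`d` subword of `P1 Q P2` is
`(hu)^j (hu)^m' w = (hu)^m' (hu)^j w = (hu)^m' (hu)^m`.
-/

@[simp]
lemma hsum_append (a b : List Step) : hsum (a ++ b) = hsum a + hsum b := by
  simp [hsum]

lemma List.prefix_or_eq_append_of_prefix_append {α : Type*} {p x y : List α}
    (hp : p <+: x ++ y) : p <+: x ∨ ∃ q, p = x ++ q ∧ q <+: y := by
  obtain ⟨r, hr⟩ := hp
  rcases List.append_eq_append_iff.mp hr with ⟨a, hx, _⟩ | ⟨q, hp, hy⟩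
  · exact Or.inl ⟨a, hx.symm⟩
  · exact Or.inr ⟨q, hp, r, hy.symm⟩

lemma NonnegPrefixes.insert {P1 P2 Q : List Step} (hP : NonnegPrefixes (P1 ++ P2))
    (hQ : NonnegPrefixes Q) : NonnegPrefixes (P1 ++ Q ++ P2) := by
  have hP1 : 0 ≤ hsum P1 := hP _ (List.prefix_append _ _)
  have hQ_sum : 0 ≤ hsum Q := hQ _ (List.prefix_refl Q)
  intro p hp
  rcases List.prefix_or_eq_append_of_prefix_append hp with hp | ⟨q, rfl, hq⟩
  · rcases List.prefix_or_eq_append_of_prefix_append hp with hp | ⟨q, rfl, hq⟩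
    · exact hP _ (hp.trans (List.prefix_append _ _))
    · simpa using add_nonneg hP1 (hQ _ hq)
  · have : 0 ≤ hsum (P1 ++ q) := hP _ ((List.prefix_append_right_inj P1).mpr hq)
    simp only [hsum_append] at this ⊢
    linarith

lemma IsMotzkin.insert {P1 P2 Q : List Step} (hP : IsMotzkin (P1 ++ P2))
    (hQ : IsMotzkin Q) : IsMotzkin (P1 ++ Q ++ P2) := by
  refine ⟨hP.1.insert hQ.1, ?_⟩
  have := hP.2
  simp only [hsum_append] at this ⊢
  linarith [hQ.2]

lemma huWord_succ (n : ℕ) : huWord (n + 1) = Step.h :: Step.u :: huWord n := by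
  simp [huWord, List.replicate_succ]

lemma huWord_add (a b : ℕ) : huWord (a + b) = huWord a ++ huWord b := by
  simp only [huWord, List.replicate_add, List.flatten_append]

lemma huWord_append_comm (a b : ℕ) : huWord a ++ huWord b = huWord b ++ huWord a := by
  rw [← huWord_add, ← huWord_add, add_comm]

lemma exists_eq_huWord_of_prefix {A : List Step} {m : ℕ} (hA : A <+: huWord m)
    (hlast : A.getLast? ≠ some Step.h) : ∃ j, A = huWord j := by
  induction m generalizing A with
  | zero => exact ⟨0, List.prefix_nil.mp hA⟩
  | succ n ih =>
    rw [huWord_succ] at hA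
    rcases A with _ | ⟨a, _ | ⟨b, A⟩⟩
    · exact ⟨0, rfl⟩
    · obtain rfl : a = Step.h := (List.cons_prefix_cons.mp hA).1
      simp at hlast
    · obtain ⟨rfl, rfl, hA'⟩ : a = Step.h ∧ b = Step.u ∧ A <+: huWord n := by
        simpa only [List.cons_prefix_cons] using hA
      have hA'_last : A.getLast? ≠ some Step.h := by
        rcases A.eq_nil_or_concat with rfl | ⟨l, c, rfl⟩ <;> simp_all [List.getLast?_cons]
      obtain ⟨j, rfl⟩ := ih hA' hA'_last
      exact ⟨j + 1, (huWord_succ j).symm⟩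

lemma List.getLast?_filter_of_getLast? {α : Type*} {p : α → Bool} {l : List α} {a : α}
    (hl : l.getLast? = some a) (ha : p a) : (l.filter p).getLast? = some a := by
  obtain ⟨l, rfl⟩ := List.getLast?_eq_some_iff.mp hl
  simp [List.getLast?_filter, ha]

lemma IsSMotzkin.insert {m m' j : ℕ} {P1 P2 Q : List Step} (hP : IsSMotzkin m (P1 ++ P2))
    (hQ : IsSMotzkin m' Q) (hP1 : P1.filter (fun s => s ≠ Step.d) = huWord j) :
    IsSMotzkin (m + m') (P1 ++ Q ++ P2) := by
  obtain ⟨hPM, hPu, hPd, hPh, hPf⟩ := hP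
  obtain ⟨hQM, hQu, hQd, hQh, hQf⟩ := hQ
  simp only [List.count_append] at hPu hPd hPh
  refine ⟨hPM.insert hQM, by simp only [List.count_append]; omega,
    by simp only [List.count_append]; omega, by simp only [List.count_append]; omega, ?_⟩
  rw [List.filter_append] at hPf
  rw [List.filter_append, List.filter_append, hP1, hQf, huWord_append_comm, List.append_assoc,
    ← hP1, hPf, ← huWord_add, add_comm]

theorem smotzkin_insertion_general (m m' : ℕ) (P Q P1 P2 : List Step)
    (hP : IsSMotzkin m P) (hQ : IsSMotzkin m' Q)
    (hsplit : P = P1 ++ P2) (hlast : P1.getLast? = some Step.u) :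
    IsSMotzkin (m + m') (P1 ++ Q ++ P2) ∧ IsSMotzkin (m + m') (P ++ Q) := by
  have hP1_prefix : P1.filter (fun s => s ≠ Step.d) <+: huWord m := by
    rw [← hP.2.2.2.2, hsplit, List.filter_append]
    exact List.prefix_append _ _
  have hP1_last : (P1.filter (fun s => s ≠ Step.d)).getLast? = some Step.u :=
    List.getLast?_filter_of_getLast? hlast (by decide)
  obtain ⟨j, hj⟩ := exists_eq_huWord_of_prefix hP1_prefix (by rw [hP1_last]; simp)
  refine ⟨IsSMotzkin.insert (hsplit ▸ hP) hQ hj, ?_⟩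
  simpa using IsSMotzkin.insert (P2 := []) (by simpa using hP) hQ hP.2.2.2.2

/-- inserting an S-Motzkin path Q into an S-Motzkin path P immediately
after the k-th up step of P (1 ≤ k ≤ number of up steps of P), or appending Q at the
end of P, yields again an S-Motzkin path. -/
theorem smotzkin_insertion (m m' k : ℕ) (P Q P1 P2 : List Step)
    (hP : IsSMotzkin m P) (hQ : IsSMotzkin m' Q)
    (hsplit : P = P1 ++ P2) (hk1 : 1 ≤ k) (hk2 : k ≤ P.count Step.u)
    (hcount : P1.count Step.u = k) (hlast : P1.getLast? = some Step.u) :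
    IsSMotzkin (m + m') (P1 ++ Q ++ P2) ∧ IsSMotzkin (m + m') (P ++ Q) :=
  smotzkin_insertion_general m m' P Q P1 P2 hP hQ hsplit hlast
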